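/- Strong membership in an internal set is equivalent to invertibility of the distance to the complement: let (A_ε)_{ε∈(0,1]} be a family of subsets of ℝ^n whose complements are nonempty, and let (x_ε) be a moderate net of points of ℝ^n. Say that (x_ε) belongs strongly to (A_ε) if x_ε ∈ A_ε eventually and, for every moderate net (y_ε) with (x_ε − y_ε) negligible, also y_ε ∈ A_ε eventually. Then (x_ε) belongs strongly to (A_ε) if and only if there exists r ∈ ℝ such that dist(x_ε, ℝ^n∖A_ε) ≥ ε^r eventually (equivalently, the class of the net (dist(x_ε, ℝ^n∖A_ε)) is invertible in ℝ̃). -/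

import Mathlib

open Set

/-!
STATEMENT 16: Strong membership in an internal set is equivalent to invertibility of the
distance to the complement: for a family `(A_ε)` of subsets of `ℝ^n` with nonempty complements
and a moderate net `(x_ε)`, the net `(x_ε)` belongs strongly to `(A_ε)` (i.e. `x_ε ∈ A_ε`
eventually and the same holds for every equivalent moderate net) if and only if there exists
`r ∈ ℝ` such that `dist(x_ε, ℝ^n ∖ A_ε) ≥ ε^r` eventually.
-/

/-- A property `P` of `ε` holds *eventually* if it holds for all `ε` in some interval `(0, η]`
with `η ∈ (0,1]`. -/
def Ev (P : ℝ → Prop) : Prop :=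
  ∃ η : ℝ, 0 < η ∧ η ≤ 1 ∧ ∀ ε : ℝ, 0 < ε → ε ≤ η → P ε

/-- A net of points of `ℝ^n` is *moderate* if `‖x ε‖ ≤ ε^(-N)` eventually, for some `N`. -/
def ModerateV {n : ℕ} (x : ℝ → EuclideanSpace ℝ (Fin n)) : Prop :=
  ∃ N : ℕ, Ev fun ε => ‖x ε‖ ≤ (ε ^ N)⁻¹

/-- A net of points of `ℝ^n` is *negligible* if `‖x ε‖ ≤ ε^q` eventually, for every `q`. -/
def NegligibleV {n : ℕ} (x : ℝ → EuclideanSpace ℝ (Fin n)) : Prop :=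
  ∀ q : ℕ, Ev fun ε => ‖x ε‖ ≤ ε ^ q

/-- `(x_ε)` belongs *strongly* to the net of sets `(A_ε)`: `x_ε ∈ A_ε` eventually, and the
same holds for every moderate net equivalent to `(x_ε)` modulo negligible nets. -/
def StrongMem {n : ℕ} (A : ℝ → Set (EuclideanSpace ℝ (Fin n)))
    (x : ℝ → EuclideanSpace ℝ (Fin n)) : Prop :=
  (Ev fun ε => x ε ∈ A ε) ∧
  ∀ y : ℝ → EuclideanSpace ℝ (Fin n), ModerateV y →
    NegligibleV (fun ε => x ε - y ε) → Ev fun ε => y ε ∈ A ε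

/-!
If `dist(x_ε, A_εᶜ) ≥ ε^r`, a net within a negligible distance of `x` is eventually closer to
`x_ε` than `ε^r` and so stays in `A_ε`. Conversely, if the distance is not bounded below by any
`ε^r`, pick `ε_k ↓ 0` with `dist(x_{ε_k}, A_{ε_k}ᶜ) < ε_k^k` and move `x_{ε_k}` to a point of
`A_{ε_k}ᶜ` that close: the result is a moderate net negligibly far from `x` which leaves `A`
infinitely often.
-/

open Filter Topology Metric

lemma eventually_mem_Ioo_nhdsGT_zero {η : ℝ} (hη : 0 < η) :
    ∀ᶠ ε in 𝓝[>] (0 : ℝ), 0 < ε ∧ ε < η :=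
  (nhdsGT_basis 0).mem_of_mem hη

lemma ev_iff_eventually {P : ℝ → Prop} : Ev P ↔ ∀ᶠ ε in 𝓝[>] (0 : ℝ), P ε := by
  constructor
  · rintro ⟨η, hη, -, hP⟩
    filter_upwards [eventually_mem_Ioo_nhdsGT_zero hη] with ε hε using hP ε hε.1 hε.2.le
  · intro h
    obtain ⟨η, hη, hP⟩ := (nhdsGT_basis (0 : ℝ)).eventually_iff.1 h
    refine ⟨min (η / 2) 1, by positivity, min_le_right _ _, fun ε hε hεη => hP ⟨hε, ?_⟩⟩
    linarith [min_le_left (η / 2) 1]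

section

variable {n : ℕ}

lemma negligibleV_iff {v : ℝ → EuclideanSpace ℝ (Fin n)} :
    NegligibleV v ↔ ∀ q : ℕ, ∀ᶠ ε in 𝓝[>] (0 : ℝ), ‖v ε‖ ≤ ε ^ q := by
  simp only [NegligibleV, ev_iff_eventually]

lemma moderateV_iff {v : ℝ → EuclideanSpace ℝ (Fin n)} :
    ModerateV v ↔ ∃ N : ℕ, ∀ᶠ ε in 𝓝[>] (0 : ℝ), ‖v ε‖ ≤ (ε ^ N)⁻¹ := by
  simp only [ModerateV, ev_iff_eventually]

lemma NegligibleV.eventually_norm_lt_rpow {v : ℝ → EuclideanSpace ℝ (Fin n)}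
    (hv : NegligibleV v) (r : ℝ) : ∀ᶠ ε in 𝓝[>] (0 : ℝ), ‖v ε‖ < ε ^ r := by
  filter_upwards [negligibleV_iff.1 hv (⌈r⌉₊ + 1), eventually_mem_Ioo_nhdsGT_zero one_pos]
    with ε hv hε
  calc ‖v ε‖ ≤ ε ^ (⌈r⌉₊ + 1) := hv
    _ = ε ^ ((⌈r⌉₊ : ℝ) + 1) := by norm_cast
    _ < ε ^ r := Real.rpow_lt_rpow_of_exponent_gt hε.1 hε.2 (by linarith [Nat.le_ceil r])

lemma ModerateV.of_negligibleV_sub {x y : ℝ → EuclideanSpace ℝ (Fin n)} (hx : ModerateV x)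
    (hxy : NegligibleV fun ε => x ε - y ε) : ModerateV y := by
  obtain ⟨N, hN⟩ := moderateV_iff.1 hx
  refine moderateV_iff.2 ⟨N + 1, ?_⟩
  filter_upwards [hN, negligibleV_iff.1 hxy 0, eventually_mem_Ioo_nhdsGT_zero one_half_pos]
    with ε hxε hxyε hε
  have hone : 1 ≤ (ε ^ N)⁻¹ :=
    (one_le_inv₀ (pow_pos hε.1 N)).2 (pow_le_one₀ hε.1.le (by linarith))
  have htwo : 2 ≤ ε⁻¹ := by rw [le_inv_comm₀ two_pos hε.1]; linarith
  calc ‖y ε‖ ≤ ‖x ε‖ + ‖x ε - y ε‖ := norm_le_norm_add_norm_sub (x ε) (y ε)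
    _ ≤ (ε ^ N)⁻¹ * 2 := by rw [pow_zero] at hxyε; linarith
    _ ≤ (ε ^ N)⁻¹ * ε⁻¹ := by gcongr
    _ = (ε ^ (N + 1))⁻¹ := by rw [pow_succ, mul_inv]

lemma exists_seq_strictAnti_of_frequently {Q : ℕ → ℝ → Prop}
    (hQ : ∀ k, ∃ᶠ ε in 𝓝[>] (0 : ℝ), Q k ε) :
    ∃ e : ℕ → ℝ, StrictAnti e ∧ Tendsto e atTop (𝓝[>] 0) ∧ ∀ k, Q k (e k) := by
  have hpick : ∀ (k : ℕ) (δ : Ioi (0 : ℝ)), ∃ ε : Ioi (0 : ℝ),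
      (ε : ℝ) < min (δ : ℝ) (1 / (k + 1)) ∧ Q k ε := by
    intro k δ
    have hδ : 0 < min (δ : ℝ) (1 / (k + 1)) := lt_min δ.2 (by positivity)
    obtain ⟨ε, hε, hpos, hlt⟩ :=
      ((hQ k).and_eventually (eventually_mem_Ioo_nhdsGT_zero hδ)).exists
    exact ⟨⟨ε, hpos⟩, hlt, hε⟩
  choose next hnext using hpick
  let g : ℕ → Ioi (0 : ℝ) := fun k =>
    Nat.rec (next 0 ⟨1, mem_Ioi.2 one_pos⟩) (fun k δ => next (k + 1) δ) k
  have hg : ∀ k, (g k).1 < 1 / (k + 1) ∧ Q k (g k).1 := by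
    rintro (_ | k)
    · exact ⟨(hnext 0 _).1.trans_le (min_le_right _ _), (hnext 0 _).2⟩
    · exact ⟨by exact_mod_cast (hnext (k + 1) (g k)).1.trans_le (min_le_right _ _),
        (hnext (k + 1) (g k)).2⟩
  refine ⟨fun k => (g k).1,
    strictAnti_nat_of_succ_lt fun k => (hnext (k + 1) (g k)).1.trans_le (min_le_left _ _),
    tendsto_nhdsWithin_iff.2 ⟨?_, .of_forall fun k => (g k).2⟩, fun k => (hg k).2⟩
  exact squeeze_zero (fun k => (g k).2.le) (fun k => (hg k).1.le)
    tendsto_one_div_add_atTop_nhds_zero_nat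

lemma exists_negligibleV_sub_frequently_not_mem {A : ℝ → Set (EuclideanSpace ℝ (Fin n))}
    (hA : ∀ ε ∈ Ioc (0 : ℝ) 1, ((A ε)ᶜ).Nonempty) {x : ℝ → EuclideanSpace ℝ (Fin n)}
    (hfreq : ∀ k : ℕ, ∃ᶠ ε in 𝓝[>] (0 : ℝ), infDist (x ε) (A ε)ᶜ < ε ^ k) :
    ∃ y : ℝ → EuclideanSpace ℝ (Fin n),
      NegligibleV (fun ε => x ε - y ε) ∧ ∃ᶠ ε in 𝓝[>] (0 : ℝ), y ε ∉ A ε := by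
  obtain ⟨e, he_anti, he_tendsto, he⟩ := exists_seq_strictAnti_of_frequently fun k =>
    (hfreq k).and_eventually (eventually_mem_Ioo_nhdsGT_zero one_pos)
  have he_mem : ∀ k, e k ∈ Ioc (0 : ℝ) 1 := fun k => ⟨(he k).2.1, (he k).2.2.le⟩
  have hz : ∀ k, ∃ z ∈ (A (e k))ᶜ, dist (x (e k)) z < e k ^ k := fun k =>
    (infDist_lt_iff (hA _ (he_mem k))).1 (he k).1
  choose z hzA hz_dist using hz
  set y := Function.extend e z x
  have hy_e : ∀ k, y (e k) = z k := he_anti.injective.extend_apply z x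
  refine ⟨y, negligibleV_iff.2 fun q => ?_,
    he_tendsto.frequently (.of_forall fun k => by simpa [hy_e] using hzA k)⟩
  filter_upwards [eventually_mem_Ioo_nhdsGT_zero (he_mem q).1] with ε hε
  by_cases hrange : ∃ k, e k = ε
  · obtain ⟨k, rfl⟩ := hrange
    have hqk : q ≤ k := (he_anti.lt_iff_gt.1 hε.2).le
    calc ‖x (e k) - y (e k)‖ = dist (x (e k)) (z k) := by rw [hy_e, dist_eq_norm]
      _ ≤ e k ^ k := (hz_dist k).le
      _ ≤ e k ^ q := pow_le_pow_of_le_one (he_mem k).1.le (he_mem k).2 hqk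
  · rw [show y ε = x ε from Function.extend_apply' z x ε hrange, sub_self, norm_zero]
    exact pow_nonneg hε.1.le q

lemma strongMem_of_eventually_rpow_le_infDist {A : ℝ → Set (EuclideanSpace ℝ (Fin n))}
    {x : ℝ → EuclideanSpace ℝ (Fin n)} {r : ℝ}
    (h : ∀ᶠ ε in 𝓝[>] (0 : ℝ), ε ^ r ≤ infDist (x ε) (A ε)ᶜ) : StrongMem A x := by
  refine ⟨ev_iff_eventually.2 ?_, fun y _ hxy => ev_iff_eventually.2 ?_⟩
  · filter_upwards [h, self_mem_nhdsWithin] with ε hε (hpos : 0 < ε)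
    refine notMem_compl_iff.1 (notMem_of_dist_lt_infDist (x := x ε) ?_)
    rw [dist_self]
    exact (Real.rpow_pos_of_pos hpos r).trans_le hε
  · filter_upwards [h, hxy.eventually_norm_lt_rpow r] with ε hε hxyε
    refine notMem_compl_iff.1 (notMem_of_dist_lt_infDist (x := x ε) ?_)
    rw [dist_eq_norm]
    exact hxyε.trans_le hε

lemma StrongMem.exists_eventually_rpow_le_infDist {A : ℝ → Set (EuclideanSpace ℝ (Fin n))}
    (hA : ∀ ε ∈ Ioc (0 : ℝ) 1, ((A ε)ᶜ).Nonempty) {x : ℝ → EuclideanSpace ℝ (Fin n)}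
    (hx : ModerateV x) (hs : StrongMem A x) :
    ∃ r : ℝ, ∀ᶠ ε in 𝓝[>] (0 : ℝ), ε ^ r ≤ infDist (x ε) (A ε)ᶜ := by
  by_contra! hfreq
  obtain ⟨y, hxy, hy⟩ := exists_negligibleV_sub_frequently_not_mem hA fun k => by
    simpa only [Real.rpow_natCast] using hfreq k
  exact not_eventually.2 hy (ev_iff_eventually.1 (hs.2 y (hx.of_negligibleV_sub hxy) hxy))

end

theorem strongMem_iff_infDist_invertible (n : ℕ)
    (A : ℝ → Set (EuclideanSpace ℝ (Fin n)))
    (hA : ∀ ε ∈ Ioc (0:ℝ) 1, ((A ε)ᶜ).Nonempty)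
    (x : ℝ → EuclideanSpace ℝ (Fin n)) (hx : ModerateV x) :
    StrongMem A x ↔ ∃ r : ℝ, Ev fun ε => ε ^ r ≤ Metric.infDist (x ε) (A ε)ᶜ := by
  simp only [ev_iff_eventually]
  exact ⟨StrongMem.exists_eventually_rpow_le_infDist hA hx,
    fun ⟨_, h⟩ => strongMem_of_eventually_rpow_le_infDist h⟩
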